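/- Let H = (X, Y) be a hypergraph with vertex set X and hyperedge set Y whose associated bipartite graph is connected, fix two distinct hyperedges y₁, y₂ ∈ Y, suppose some vertex x ∈ X is incident to both y₁ and y₂, and let H' = (X ∪ {x*}, Y) be obtained from H by adjoining one new vertex x* incident to exactly y₁ and y₂. Then every hypertree g : Y → ℕ of H' admits a realizing spanning tree of bip H' (i.e., a spanning tree whose degree at each y ∈ Y equals g(y) + 1) in which the vertex x* has degree 1. -/

import Mathlib

open SimpleGraph

/-- The bipartite graph associated to a hypergraph with hyperedge set `Y`,
vertex set `X`, and incidence function `I`. -/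
def bip {X Y : Type*} (I : Y → Finset X) : SimpleGraph (Y ⊕ X) :=
  SimpleGraph.fromRel fun a b =>
    ∃ y x, a = Sum.inl y ∧ b = Sum.inr x ∧ x ∈ I y

/-- `f : Y → ℕ` is a hypertree: there is a spanning tree of `bip I` whose
degree at each `y ∈ Y` is `f y + 1`. -/
def IsHypertree {X Y : Type*} (I : Y → Finset X) (f : Y → ℕ) : Prop :=
  ∃ T : SimpleGraph (Y ⊕ X), T ≤ bip I ∧ T.IsTree ∧
    ∀ y : Y, (T.neighborSet (Sum.inl y)).ncard = f y + 1

/-- The incidence function of the hypergraph `H' = (X ∪ {x*}, Y)` obtained by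
adjoining one new vertex `x* = none` incident to exactly `y₁` and `y₂`. -/
def extInc {X Y : Type*} [DecidableEq X] [DecidableEq Y] (I : Y → Finset X)
    (y₁ y₂ : Y) : Y → Finset (Option X) :=
  fun y => (I y).map Function.Embedding.some ∪
    (if y = y₁ ∨ y = y₂ then {none} else ∅)

/-!
Let `T` realize `g`. The new vertex `x*` is adjacent only to `y₁` and `y₂`; if its degree in `T`
is not `1`, it is adjacent to both. The path in `T` from `x*` to a common vertex `x` of `y₁` and
`y₂` leaves `x*` through one of these edges only, so deleting the other one, say `x* y`, leaves
`x` on the side of `x*`. Replacing `x* y` by `y x` then gives a spanning tree of `bip H'` in which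
`y` trades the neighbour `x*` for `x`, every other hyperedge keeps its neighbours, and `x*` has
degree `1`.
-/

namespace SimpleGraph

variable {V : Type*} {G T : SimpleGraph V} {u v w z : V}

def rotateEdge (G : SimpleGraph V) (u v w : V) : SimpleGraph V :=
  G.deleteEdges {s(u, v)} ⊔ edge v w

lemma Reachable.of_forall_adj_reachable {H : SimpleGraph V}
    (h : ∀ a b, G.Adj a b → H.Reachable a b) (huv : G.Reachable u v) : H.Reachable u v := by
  rw [reachable_iff_reflTransGen] at huv ⊢
  exact Relation.reflTransGen_closed
    (fun a b hab ↦ (reachable_iff_reflTransGen a b).mp (h a b hab)) _ _ huv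

/-- A path starting at `u` leaves `u` through a single edge, so it avoids `s(u, b)` or `s(u, c)`. -/
lemma Reachable.reachable_deleteEdges_or (h : G.Reachable u w) {b c : V} (hbc : b ≠ c) :
    (G.deleteEdges {s(u, b)}).Reachable u w ∨ (G.deleteEdges {s(u, c)}).Reachable u w := by
  obtain ⟨p, hp⟩ := h.exists_isPath
  cases p with
  | nil => exact .inl .rfl
  | @cons _ d _ hud q =>
    have hq : u ∉ q.support := ((Walk.cons_isPath_iff hud q).mp hp).2
    have avoid : ∀ {e}, e ≠ d → s(u, e) ∉ (Walk.cons hud q).edges := by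
      intro e hed he
      rcases List.mem_cons.mp he with he | he
      · exact hed (Sym2.congr_right.mp he)
      · exact hq (q.fst_mem_support_of_mem_edges he)
    simp only [reachable_deleteEdges_iff_exists_walk]
    by_cases hbd : b = d
    · exact .inr ⟨_, avoid (hbd ▸ hbc.symm)⟩
    · exact .inl ⟨_, avoid hbd⟩

lemma Preconnected.neighborSet_eq_pair [Nontrivial V] (hG : G.Preconnected) {a b : V}
    (hsub : G.neighborSet u ⊆ {a, b}) (h1 : (G.neighborSet u).ncard ≠ 1) :
    G.neighborSet u = {a, b} := by
  obtain ⟨c, hc⟩ := hG.exists_adj_of_nontrivial u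
  rcases Set.subset_pair_iff_eq.mp hsub with h | h | h | h
  · rw [← mem_neighborSet, h] at hc
    exact hc.elim
  · simp [h] at h1
  · simp [h] at h1
  · exact h

lemma IsAcyclic.not_reachable_deleteEdges (hT : T.IsAcyclic) (huv : T.Adj u v) :
    ¬ (T.deleteEdges {s(u, v)}).Reachable u v :=
  isBridge_iff.mp (isAcyclic_iff_forall_adj_isBridge.mp hT huv)

lemma IsAcyclic.not_reachable_deleteEdges_of_reachable (hT : T.IsAcyclic) (huv : T.Adj u v)
    (huw : (T.deleteEdges {s(u, v)}).Reachable u w) :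
    ¬ (T.deleteEdges {s(u, v)}).Reachable v w :=
  fun hvw ↦ hT.not_reachable_deleteEdges huv (huw.trans hvw.symm)

lemma IsAcyclic.not_adj_of_reachable_deleteEdges (hT : T.IsAcyclic) (huv : T.Adj u v)
    (huw : (T.deleteEdges {s(u, v)}).Reachable u w) (hwu : w ≠ u) : ¬ T.Adj v w := by
  intro hvw
  refine hT.not_reachable_deleteEdges_of_reachable huv huw (Adj.reachable ?_)
  simp [deleteEdges_adj, hvw, hwu, huv.ne.symm]

theorem IsTree.rotateEdge (hT : T.IsTree) (huv : T.Adj u v)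
    (huw : (T.deleteEdges {s(u, v)}).Reachable u w) : (T.rotateEdge u v w).IsTree := by
  have hvw := hT.isAcyclic.not_reachable_deleteEdges_of_reachable huv huw
  have hne : v ≠ w := fun h ↦ hvw (h ▸ .rfl)
  have hreach : (T.rotateEdge u v w).Reachable u v :=
    (huw.mono le_sup_left).trans
      (Adj.reachable (.inr ((edge_adj _ _ _ _).mpr ⟨.inr ⟨rfl, rfl⟩, hne.symm⟩)))
  have hadj : ∀ a b, T.Adj a b → (T.rotateEdge u v w).Reachable a b := by
    intro a b hab
    by_cases he : s(a, b) = s(u, v)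
    · rcases Sym2.eq_iff.mp he with ⟨rfl, rfl⟩ | ⟨rfl, rfl⟩
      exacts [hreach, hreach.symm]
    · exact (Adj.reachable (by simp [deleteEdges_adj, hab, he])).mono le_sup_left
  have : Nonempty V := ⟨u⟩
  exact ⟨⟨fun a b ↦ (hT.connected.preconnected a b).of_forall_adj_reachable hadj⟩,
    (hT.isAcyclic.anti (deleteEdges_le _)).sup_edge_of_not_reachable hvw⟩

lemma neighborSet_rotateEdge_of_ne (hzu : z ≠ u) (hzv : z ≠ v) (hzw : z ≠ w) :
    (G.rotateEdge u v w).neighborSet z = G.neighborSet z := by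
  ext a
  simp [SimpleGraph.rotateEdge, edge_adj, deleteEdges_adj, hzu, hzv, hzw]

lemma neighborSet_rotateEdge_right (hvw : v ≠ w) :
    (G.rotateEdge u v w).neighborSet v = insert w (G.neighborSet v \ {u}) := by
  ext a
  simp only [SimpleGraph.rotateEdge, neighborSet_sup, Set.mem_union, mem_neighborSet,
    deleteEdges_adj, edge_adj, Set.mem_insert_iff, Set.mem_sdiff, Set.mem_singleton_iff,
    Sym2.eq_iff]
  grind [Adj.ne]

lemma neighborSet_rotateEdge_left (huv : u ≠ v) (huw : u ≠ w) :
    (G.rotateEdge u v w).neighborSet u = G.neighborSet u \ {v} := by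
  ext a
  simp [SimpleGraph.rotateEdge, edge_adj, deleteEdges_adj, huv, huw]

lemma ncard_neighborSet_rotateEdge (huv : G.Adj u v) (hvw : ¬ G.Adj v w) (hne : v ≠ w)
    (hzu : z ≠ u) (hzw : z ≠ w) :
    ((G.rotateEdge u v w).neighborSet z).ncard = (G.neighborSet z).ncard := by
  by_cases hzv : z = v
  · subst hzv
    rw [neighborSet_rotateEdge_right hne]
    exact Set.ncard_exchange (s := G.neighborSet _) hvw huv.symm
  · rw [neighborSet_rotateEdge_of_ne hzu hzv hzw]

end SimpleGraph

section Hypergraph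

variable {X Y : Type*} {I : Y → Finset X}

lemma bip_adj_inr {x : X} {z : Y ⊕ X} :
    (bip I).Adj (.inr x) z ↔ ∃ y, z = .inl y ∧ x ∈ I y := by
  simp only [bip, fromRel_adj]
  grind

lemma bip_adj_inl_inr {y : Y} {x : X} : (bip I).Adj (.inl y) (.inr x) ↔ x ∈ I y := by
  simp [bip, fromRel_adj]

variable [DecidableEq X] [DecidableEq Y] {y₁ y₂ : Y}

lemma mem_extInc_some {y : Y} {x : X} : some x ∈ extInc I y₁ y₂ y ↔ x ∈ I y := by
  simp only [extInc]
  split_ifs <;> simp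

lemma mem_extInc_none {y : Y} : none ∈ extInc I y₁ y₂ y ↔ y = y₁ ∨ y = y₂ := by
  simp only [extInc]
  split_ifs <;> simp [*]

lemma bip_extInc_adj_none {z : Y ⊕ Option X} :
    (bip (extInc I y₁ y₂)).Adj (.inr none) z ↔ z = .inl y₁ ∨ z = .inl y₂ := by
  simp [bip_adj_inr, mem_extInc_none, and_or_left, exists_or]

end Hypergraph

theorem extInc_realization_degree_one_general {X Y : Type*}
    [DecidableEq X] [DecidableEq Y] (I : Y → Finset X)
    (y₁ y₂ : Y) (hy : y₁ ≠ y₂) (hx : ∃ x, x ∈ I y₁ ∧ x ∈ I y₂)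
    (g : Y → ℕ) (hg : IsHypertree (extInc I y₁ y₂) g) :
    ∃ T : SimpleGraph (Y ⊕ Option X), T ≤ bip (extInc I y₁ y₂) ∧ T.IsTree ∧
      (∀ y : Y, (T.neighborSet (Sum.inl y)).ncard = g y + 1) ∧
      (T.neighborSet (Sum.inr (none : Option X))).ncard = 1 := by
  obtain ⟨x, hx₁, hx₂⟩ := hx
  obtain ⟨T, hTle, hT, hTdeg⟩ := hg
  set n : Y ⊕ Option X := .inr none
  by_cases hdeg : (T.neighborSet n).ncard = 1
  · exact ⟨T, hTle, hT, hTdeg, hdeg⟩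
  have : Nontrivial (Y ⊕ Option X) := ⟨⟨n, .inl y₁, Sum.inr_ne_inl⟩⟩
  have hN : T.neighborSet n = {.inl y₁, .inl y₂} :=
    hT.connected.preconnected.neighborSet_eq_pair
      (fun z hz ↦ bip_extInc_adj_none.mp (hTle hz)) hdeg
  obtain ⟨y, hyx, hadj, hreach⟩ : ∃ y, x ∈ I y ∧ T.Adj n (.inl y) ∧
      (T.deleteEdges {s(n, .inl y)}).Reachable n (.inr (some x)) := by
    have hadj : ∀ {y}, y = y₁ ∨ y = y₂ → T.Adj n (.inl y) := fun hy ↦ by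
      rw [← mem_neighborSet, hN]; simpa using hy
    rcases (hT.connected.preconnected n (.inr (some x))).reachable_deleteEdges_or
      (Sum.inl_injective.ne hy) with h | h
    exacts [⟨y₁, hx₁, hadj (.inl rfl), h⟩, ⟨y₂, hx₂, hadj (.inr rfl), h⟩]
  refine ⟨T.rotateEdge n (.inl y) (.inr (some x)), ?_, hT.rotateEdge hadj hreach,
    fun z ↦ ?_, ?_⟩
  · exact sup_le ((deleteEdges_le _).trans hTle)
      ((edge_le_iff _).mpr (.inr (bip_adj_inl_inr.mpr (mem_extInc_some.mpr hyx))))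
  · rw [ncard_neighborSet_rotateEdge hadj
      (hT.isAcyclic.not_adj_of_reachable_deleteEdges hadj hreach (by simp [n])) (by simp)
      (by simp [n]) (by simp)]
    exact hTdeg z
  · rw [neighborSet_rotateEdge_left (by simp [n]) (by simp [n]), hN,
      Set.ncard_sdiff_singleton_of_mem (by rw [← hN]; exact hadj), Set.ncard_pair (by simpa)]

/-- If some vertex `x ∈ X` is incident to both `y₁` and `y₂`, then every
hypertree `g` of `H'` admits a realizing spanning tree in which the new
vertex `x* = none` has degree `1`. -/
theorem extInc_realization_degree_one {X Y : Type*} [Fintype X] [Fintype Y]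
    [DecidableEq X] [DecidableEq Y] (I : Y → Finset X)
    (hne : ∀ y, (I y).Nonempty) (hconn : (bip I).Connected)
    (y₁ y₂ : Y) (hy : y₁ ≠ y₂) (hx : ∃ x, x ∈ I y₁ ∧ x ∈ I y₂)
    (g : Y → ℕ) (hg : IsHypertree (extInc I y₁ y₂) g) :
    ∃ T : SimpleGraph (Y ⊕ Option X), T ≤ bip (extInc I y₁ y₂) ∧ T.IsTree ∧
      (∀ y : Y, (T.neighborSet (Sum.inl y)).ncard = g y + 1) ∧
      (T.neighborSet (Sum.inr (none : Option X))).ncard = 1 :=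
  extInc_realization_degree_one_general I y₁ y₂ hy hx g hg
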